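/- Let A be a positive self-adjoint operator on a Hilbert space X with ‖e^{-tA}‖ ≤ e^{-δt} for some δ > 0, let x ∈ X, and T > 0. Then ∫_0^T ∫_0^t ‖A^{1/2} e^{-(t-r)A} x‖_X² dr dt = (T/2)‖x‖² − (1/2)∫_0^T (e^{-2tA} x, x)_X dt ≥ (T/2 − (1 − e^{-2Tδ})/(4δ)) ‖x‖²_X. -/

import Mathlib

/-!
Weighting by `x²` turns every integral into one against the finite measure `ν = x² μ`. For fixed
`ω` the inner integral is elementary, `∫₀ᵗ m e^{-2(t-r)m} dr = (1 - e^{-2tm})/2`, and since the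
integrand is nonnegative Fubini lets us integrate in `r` first; this gives the identity. The bound
follows from `e^{-2tm} ≤ e^{-2tδ}` and `∫₀ᵀ e^{-2tδ} dt = (1 - e^{-2Tδ})/(2δ)`.
-/

open MeasureTheory

lemma integral_mul_exp_neg_two_mul (c T : ℝ) :
    ∫ t in (0:ℝ)..T, c * Real.exp (-(2 * t * c)) = (1 - Real.exp (-(2 * T * c))) / 2 := by
  have hderiv : ∀ t ∈ Set.uIcc (0:ℝ) T,
      HasDerivAt (fun t => -Real.exp (-(2 * t * c)) / 2) (c * Real.exp (-(2 * t * c))) t := by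
    intro t _
    have hlin : HasDerivAt (fun t : ℝ => -(2 * t * c)) (-(2 * c)) t :=
      (hasDerivAt_mul_const (-(2 * c))).congr_of_eventuallyEq
        (Filter.Eventually.of_forall fun s => by ring)
    refine (hlin.exp.neg.div_const 2).congr_deriv ?_
    ring
  rw [intervalIntegral.integral_eq_sub_of_hasDerivAt hderiv
    (Continuous.intervalIntegrable (by fun_prop) 0 T)]
  simp only [mul_zero, zero_mul, neg_zero, Real.exp_zero]
  ring

lemma integral_mul_exp_neg_two_mul_sub (c t : ℝ) :
    ∫ r in (0:ℝ)..t, c * Real.exp (-(2 * (t - r) * c)) = (1 - Real.exp (-(2 * t * c))) / 2 := by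
  rw [intervalIntegral.integral_comp_sub_left (fun u => c * Real.exp (-(2 * u * c))), sub_self,
    sub_zero, integral_mul_exp_neg_two_mul]

lemma integral_exp_neg_two_mul {δ : ℝ} (hδ : δ ≠ 0) (T : ℝ) :
    ∫ t in (0:ℝ)..T, Real.exp (-(2 * t * δ)) = (1 - Real.exp (-(2 * T * δ))) / (2 * δ) := by
  have h := integral_mul_exp_neg_two_mul δ T
  rw [intervalIntegral.integral_const_mul] at h
  rw [eq_div_iff (mul_ne_zero two_ne_zero hδ)]
  linear_combination 2 * h

lemma exp_neg_two_mul_mul_le_one {t c : ℝ} (ht : 0 ≤ t) (hc : 0 ≤ c) :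
    Real.exp (-(2 * t * c)) ≤ 1 :=
  Real.exp_le_one_iff.mpr (by have := mul_nonneg ht hc; linarith)

lemma integral_withDensity_ofReal_eq_integral_mul {σ : Type*} [MeasurableSpace σ]
    {μ : Measure σ} {f : σ → ℝ} (hf : AEMeasurable f μ) (hf0 : ∀ ω, 0 ≤ f ω) (g : σ → ℝ) :
    ∫ ω, g ω ∂μ.withDensity (fun ω => ENNReal.ofReal (f ω)) = ∫ ω, g ω * f ω ∂μ := by
  rw [integral_withDensity_eq_integral_toReal_smul₀ hf.ennreal_ofReal
    (ae_of_all _ fun _ => ENNReal.ofReal_lt_top)]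
  congr with ω
  rw [ENNReal.toReal_ofReal (hf0 ω), smul_eq_mul, mul_comm]

section FiniteMeasure

variable {σ : Type*} [MeasurableSpace σ] {ν : Measure σ} [IsFiniteMeasure ν] {m : σ → ℝ}

lemma integrable_exp_neg_two_mul (hm : Measurable m) (hm0 : ∀ ω, 0 ≤ m ω) {t : ℝ} (ht : 0 ≤ t) :
    Integrable (fun ω => Real.exp (-(2 * t * m ω))) ν :=
  .of_bound (by fun_prop) 1 <| ae_of_all _ fun ω => by
    rw [Real.norm_of_nonneg (Real.exp_pos _).le]
    exact exp_neg_two_mul_mul_le_one ht (hm0 ω)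

lemma continuousOn_integral_exp_neg_two_mul (hm : Measurable m) (hm0 : ∀ ω, 0 ≤ m ω) :
    ContinuousOn (fun t => ∫ ω, Real.exp (-(2 * t * m ω)) ∂ν) (Set.Ici 0) :=
  continuousOn_of_dominated (bound := fun _ => 1) (fun t _ => by fun_prop)
    (fun t ht => ae_of_all _ fun ω => by
      rw [Real.norm_of_nonneg (Real.exp_pos _).le]
      exact exp_neg_two_mul_mul_le_one ht (hm0 ω))
    (integrable_const 1) (ae_of_all _ fun ω => by fun_prop)

lemma intervalIntegrable_integral_exp_neg_two_mul (hm : Measurable m) (hm0 : ∀ ω, 0 ≤ m ω)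
    {T : ℝ} (hT : 0 ≤ T) :
    IntervalIntegrable (fun t => ∫ ω, Real.exp (-(2 * t * m ω)) ∂ν) volume 0 T :=
  ((continuousOn_integral_exp_neg_two_mul hm hm0).mono Set.Icc_subset_Ici_self)
    |>.intervalIntegrable_of_Icc hT

lemma integral_integral_mul_exp_neg_two_mul_sub (hm : Measurable m) (hm0 : ∀ ω, 0 ≤ m ω)
    {t : ℝ} (ht : 0 ≤ t) :
    ∫ r in (0:ℝ)..t, ∫ ω, m ω * Real.exp (-(2 * (t - r) * m ω)) ∂ν
      = (ν.real Set.univ - ∫ ω, Real.exp (-(2 * t * m ω)) ∂ν) / 2 := by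
  have hinner : ∀ ω, ∫ r in Set.Ioc 0 t, m ω * Real.exp (-(2 * (t - r) * m ω))
      = (1 - Real.exp (-(2 * t * m ω))) / 2 := fun ω => by
    rw [← intervalIntegral.integral_of_le ht, integral_mul_exp_neg_two_mul_sub]
  have hnorm : ∀ r ω, ‖m ω * Real.exp (-(2 * (t - r) * m ω))‖
      = m ω * Real.exp (-(2 * (t - r) * m ω)) := fun r ω =>
    Real.norm_of_nonneg (mul_nonneg (hm0 ω) (Real.exp_pos _).le)
  have hint : Integrable (fun p : ℝ × σ => m p.2 * Real.exp (-(2 * (t - p.1) * m p.2)))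
      ((volume.restrict (Set.Ioc 0 t)).prod ν) := by
    rw [integrable_prod_iff' (by fun_prop)]
    refine ⟨ae_of_all _ fun ω => (by fun_prop : Continuous _).integrableOn_Ioc, ?_⟩
    simp only [hnorm, hinner]
    exact ((integrable_const 1).sub (integrable_exp_neg_two_mul hm hm0 ht)).div_const 2
  rw [intervalIntegral.integral_of_le ht, integral_integral_swap hint]
  simp only [hinner]
  rw [integral_div, integral_sub (integrable_const 1) (integrable_exp_neg_two_mul hm hm0 ht),
    integral_const, smul_eq_mul, mul_one]

theorem integral_integral_integral_mul_exp_neg_two_mul_sub (hm : Measurable m)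
    (hm0 : ∀ ω, 0 ≤ m ω) {T : ℝ} (hT : 0 ≤ T) :
    ∫ t in (0:ℝ)..T, ∫ r in (0:ℝ)..t, ∫ ω, m ω * Real.exp (-(2 * (t - r) * m ω)) ∂ν
      = T / 2 * ν.real Set.univ - 1 / 2 * ∫ t in (0:ℝ)..T, ∫ ω, Real.exp (-(2 * t * m ω)) ∂ν := by
  rw [intervalIntegral.integral_congr fun t ht =>
      integral_integral_mul_exp_neg_two_mul_sub hm hm0 (Set.uIcc_of_le hT ▸ ht).1,
    intervalIntegral.integral_div, intervalIntegral.integral_sub intervalIntegrable_const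
      (intervalIntegrable_integral_exp_neg_two_mul hm hm0 hT),
    intervalIntegral.integral_const, smul_eq_mul]
  ring

theorem integral_integral_exp_neg_two_mul_le (hm : Measurable m) {δ : ℝ} (hδ : 0 < δ)
    (hmδ : ∀ ω, δ ≤ m ω) {T : ℝ} (hT : 0 ≤ T) :
    ∫ t in (0:ℝ)..T, ∫ ω, Real.exp (-(2 * t * m ω)) ∂ν
      ≤ (1 - Real.exp (-(2 * T * δ))) / (2 * δ) * ν.real Set.univ := by
  have hm0 : ∀ ω, 0 ≤ m ω := fun ω => hδ.le.trans (hmδ ω)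
  have hpointwise : ∀ t ∈ Set.Icc 0 T,
      ∫ ω, Real.exp (-(2 * t * m ω)) ∂ν ≤ Real.exp (-(2 * t * δ)) * ν.real Set.univ := by
    intro t ht
    calc ∫ ω, Real.exp (-(2 * t * m ω)) ∂ν ≤ ∫ _, Real.exp (-(2 * t * δ)) ∂ν :=
          integral_mono (integrable_exp_neg_two_mul hm hm0 ht.1) (integrable_const _) fun ω =>
            Real.exp_le_exp.mpr (by nlinarith [hmδ ω, ht.1])
      _ = Real.exp (-(2 * t * δ)) * ν.real Set.univ := by rw [integral_const, smul_eq_mul, mul_comm]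
  calc ∫ t in (0:ℝ)..T, ∫ ω, Real.exp (-(2 * t * m ω)) ∂ν
      ≤ ∫ t in (0:ℝ)..T, Real.exp (-(2 * t * δ)) * ν.real Set.univ :=
        intervalIntegral.integral_mono_on hT (intervalIntegrable_integral_exp_neg_two_mul hm hm0 hT)
          (Continuous.intervalIntegrable (by fun_prop) 0 T) hpointwise
    _ = (1 - Real.exp (-(2 * T * δ))) / (2 * δ) * ν.real Set.univ := by
        rw [intervalIntegral.integral_mul_const, integral_exp_neg_two_mul hδ.ne']

end FiniteMeasure

/-- Spectral model: `X = L²(μ)` and `A` is multiplication by `m`, so that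
`‖A^{1/2}e^{-uA}x‖² = ∫ m e^{-2um}x² dμ` and `(e^{-2tA}x, x) = ∫ e^{-2tm}x² dμ`. -/
theorem statement7_general {σ : Type*} [MeasurableSpace σ] (μ : Measure σ)
    (m : σ → ℝ) (hm : Measurable m) (δ : ℝ) (hδ : 0 < δ) (hmδ : ∀ ω, δ ≤ m ω)
    (x : σ → ℝ)
    (hxL2 : Integrable (fun ω => x ω ^ 2) μ)
    (T : ℝ) (hT : 0 < T) :
    (∫ t in (0:ℝ)..T, ∫ r in (0:ℝ)..t, ∫ ω, m ω * Real.exp (-(2 * (t - r) * m ω)) * x ω ^ 2 ∂μ)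
        = T/2 * (∫ ω, x ω ^ 2 ∂μ)
          - (1/2) * ∫ t in (0:ℝ)..T, ∫ ω, Real.exp (-(2 * t * m ω)) * x ω ^ 2 ∂μ ∧
    (T/2 - (1 - Real.exp (-(2 * T * δ))) / (4 * δ)) * (∫ ω, x ω ^ 2 ∂μ)
        ≤ ∫ t in (0:ℝ)..T, ∫ r in (0:ℝ)..t, ∫ ω, m ω * Real.exp (-(2 * (t - r) * m ω)) * x ω ^ 2 ∂μ := by
  set ν := μ.withDensity fun ω => ENNReal.ofReal (x ω ^ 2)
  have : IsFiniteMeasure ν := isFiniteMeasure_withDensity_ofReal hxL2.2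
  have hν : ∀ g : σ → ℝ, ∫ ω, g ω ∂ν = ∫ ω, g ω * x ω ^ 2 ∂μ :=
    integral_withDensity_ofReal_eq_integral_mul hxL2.aemeasurable fun ω => sq_nonneg _
  have hnorm : ∫ ω, x ω ^ 2 ∂μ = ν.real Set.univ := by simpa using (hν 1).symm
  simp only [hnorm, ← hν]
  rw [integral_integral_integral_mul_exp_neg_two_mul_sub hm (fun ω => hδ.le.trans (hmδ ω)) hT.le]
  have hbound := integral_integral_exp_neg_two_mul_le (ν := ν) hm hδ hmδ hT.le
  exact ⟨rfl, by linear_combination (1 / 2) * hbound⟩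

/-- For a positive invertible self-adjoint operator `A` with
`‖e^{-tA}‖ ≤ e^{-δt}`, `x ∈ X` and `T > 0`:
`∫_0^T∫_0^t ‖A^{1/2}e^{-(t-r)A}x‖² dr dt = (T/2)‖x‖² − (1/2)∫_0^T (e^{-2tA}x,x) dt
  ≥ (T/2 − (1−e^{-2Tδ})/(4δ))‖x‖²`.

Spectral model (spectral theorem): `X = L²(μ)`, `A` = multiplication by a measurable
`m ≥ δ > 0`; then `‖A^{1/2}e^{-uA}x‖² = ∫ m e^{-2um}x² dμ`,
`(e^{-2tA}x,x) = ∫ e^{-2tm}x² dμ`, `‖x‖² = ∫ x² dμ`. -/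
theorem statement7 {σ : Type*} [MeasurableSpace σ] (μ : Measure σ)
    (m : σ → ℝ) (hm : Measurable m) (δ : ℝ) (hδ : 0 < δ) (hmδ : ∀ ω, δ ≤ m ω)
    (x : σ → ℝ) (hx : Measurable x)
    (hxL2 : Integrable (fun ω => x ω ^ 2) μ)
    (T : ℝ) (hT : 0 < T) :
    (∫ t in (0:ℝ)..T, ∫ r in (0:ℝ)..t, ∫ ω, m ω * Real.exp (-(2 * (t - r) * m ω)) * x ω ^ 2 ∂μ)
        = T/2 * (∫ ω, x ω ^ 2 ∂μ)
          - (1/2) * ∫ t in (0:ℝ)..T, ∫ ω, Real.exp (-(2 * t * m ω)) * x ω ^ 2 ∂μ ∧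
    (T/2 - (1 - Real.exp (-(2 * T * δ))) / (4 * δ)) * (∫ ω, x ω ^ 2 ∂μ)
        ≤ ∫ t in (0:ℝ)..T, ∫ r in (0:ℝ)..t, ∫ ω, m ω * Real.exp (-(2 * (t - r) * m ω)) * x ω ^ 2 ∂μ :=
  statement7_general μ m hm δ hδ hmδ x hxL2 T hT
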